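/- (Blackwell's theorem for random variables.) Let S, X₁, X₂ be finite sets, let p be a probability distribution on S with full support (p s > 0 for all s), and let κ₁, κ₂ be channels from S to X₁ and from S to X₂. Then κ₁ is a garbling of κ₂ if and only if for every finite action set A and every utility function u : A × S → ℝ, the optimal expected utilities satisfy U(p,u,κ₁) ≤ U(p,u,κ₂). (In contrast to Blackwell's theorem, the input distribution p is fixed and only the utility function varies.) -/

import Mathlib

open Finset

/-- A probability distribution on a finite set. -/
def IsDist {S : Type} [Fintype S] (p : S → ℝ) : Prop :=
  (∀ s, 0 ≤ p s) ∧ ∑ s, p s = 1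

/-- A channel from `S` to `X`: a column-stochastic matrix. -/
def IsChannel {S X : Type} [Fintype S] [Fintype X] (κ : X → S → ℝ) : Prop :=
  (∀ x s, 0 ≤ κ x s) ∧ ∀ s, ∑ x, κ x s = 1

/-- `κ₁` is a garbling of `κ₂` (the Blackwell order `κ₁ ⪯ κ₂`). -/
def IsGarbling {S X₁ X₂ : Type} [Fintype S] [Fintype X₁] [Fintype X₂]
    (κ₁ : X₁ → S → ℝ) (κ₂ : X₂ → S → ℝ) : Prop :=
  ∃ lam : X₁ → X₂ → ℝ, IsChannel lam ∧ ∀ x₁ s, κ₁ x₁ s = ∑ x₂, lam x₁ x₂ * κ₂ x₂ s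

/-- Optimal expected utility: maximum over decision rules `d : X → A`. -/
noncomputable def optUtility {S X A : Type} [Fintype S] [Fintype X] [Fintype A]
    (p : S → ℝ) (u : A × S → ℝ) (κ : X → S → ℝ) : ℝ :=
  ⨆ d : X → A, ∑ s, ∑ x, p s * κ x s * u (d x, s)

/-- Mutual information between input (with distribution `p`) and output of channel `κ`;
terms with `κ x s = 0` are taken to be `0`. -/
noncomputable def mutualInfo {S X : Type} [Fintype S] [Fintype X]
    (p : S → ℝ) (κ : X → S → ℝ) : ℝ :=
  ∑ s, ∑ x, if κ x s = 0 then 0 else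
    p s * κ x s * Real.log (κ x s / ∑ s', p s' * κ x s')

/-- Channel composition: `(κ·λ) x s = ∑ t, κ x t * λ t s`. -/
def chanComp {S T X : Type} [Fintype S] [Fintype T] [Fintype X]
    (κ : X → T → ℝ) (lam : T → S → ℝ) : X → S → ℝ :=
  fun x s => ∑ t, κ x t * lam t s

/-- Marginal on `S` of a joint distribution on `S × X₁ × X₂`. -/
noncomputable def margS3 {S X₁ X₂ : Type} [Fintype S] [Fintype X₁] [Fintype X₂]
    (P : S × X₁ × X₂ → ℝ) (s : S) : ℝ := ∑ x₁, ∑ x₂, P (s, x₁, x₂)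

/-- The channel `X₁ ← S` of conditional probabilities `P(X₁ = x₁ | S = s)`. -/
noncomputable def chan1of3 {S X₁ X₂ : Type} [Fintype S] [Fintype X₁] [Fintype X₂]
    (P : S × X₁ × X₂ → ℝ) (x₁ : X₁) (s : S) : ℝ :=
  (∑ x₂, P (s, x₁, x₂)) / margS3 P s

/-- The channel `X₂ ← S` of conditional probabilities `P(X₂ = x₂ | S = s)`. -/
noncomputable def chan2of3 {S X₁ X₂ : Type} [Fintype S] [Fintype X₁] [Fintype X₂]
    (P : S × X₁ × X₂ → ℝ) (x₂ : X₂) (s : S) : ℝ :=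
  (∑ x₁, P (s, x₁, x₂)) / margS3 P s

/-- Pushforward of a joint distribution on `S × X₁ × X₂` along `f : S → S'`. -/
noncomputable def push3 {S S' X₁ X₂ : Type} [Fintype S] [Fintype X₁] [Fintype X₂]
    [DecidableEq S'] (f : S → S') (P : S × X₁ × X₂ → ℝ) : S' × X₁ × X₂ → ℝ :=
  fun q => ∑ s ∈ Finset.univ.filter (fun s => f s = q.1), P (s, q.2.1, q.2.2)

/-! A garbling `λ ∘ κ₂` can only lose utility: for each output `y` of `κ₂`, the mixture `λ(· | y)`
of decisions is beaten by its best pure decision, which gives a decision rule for `κ₂`.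

Conversely, if `κ₁` is not a garbling of `κ₂`, then `κ₁`, seen as a point of `ℝ^(X₁ × S)`, lies
outside the compact convex set of garblings of `κ₂`. A separating hyperplane with coefficients `c`
defines the utility `u (x, s) = c (x, s) / p s` on the action set `X₁`; it turns the expected
utility of a decision rule into the value of the separating functional, so following the output
of `κ₁` beats every decision rule based on `κ₂`. -/

theorem nonempty_of_sum_eq_one {ι : Type*} [Fintype ι] {w : ι → ℝ} (hw₁ : ∑ i, w i = 1) :
    Nonempty ι :=
  univ_nonempty_iff.mp <| nonempty_of_sum_ne_zero (hw₁ ▸ one_ne_zero)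

theorem exists_sum_mul_le_apply {ι : Type*} [Fintype ι] {w : ι → ℝ} (hw : ∀ i, 0 ≤ w i)
    (hw₁ : ∑ i, w i = 1) (f : ι → ℝ) : ∃ i, ∑ j, w j * f j ≤ f i := by
  have := nonempty_of_sum_eq_one hw₁
  obtain ⟨i, hi⟩ := Finite.exists_max f
  refine ⟨i, ?_⟩
  calc ∑ j, w j * f j ≤ ∑ j, w j * f i :=
        sum_le_sum fun j _ => mul_le_mul_of_nonneg_left (hi j) (hw j)
    _ = f i := by rw [← sum_mul, hw₁, one_mul]

theorem exists_sum_mul_lt_of_notMem {ι : Type*} [Fintype ι] {K : Set (ι → ℝ)}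
    (hconv : Convex ℝ K) (hclosed : IsClosed K) {m : ι → ℝ} (hm : m ∉ K) :
    ∃ (c : ι → ℝ) (b : ℝ), (∀ k ∈ K, ∑ i, k i * c i < b) ∧ b < ∑ i, m i * c i := by
  classical
  obtain ⟨f, b, hK, hfm⟩ := geometric_hahn_banach_closed_point hconv hclosed hm
  have hf : ∀ k, f k = ∑ i, k i * f fun j => if i = j then 1 else 0 :=
    (f : (ι → ℝ) →ₗ[ℝ] ℝ).pi_apply_eq_sum_univ
  exact ⟨_, b, fun k hk => hf k ▸ hK k hk, hf m ▸ hfm⟩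

section Channels

variable {S X Y A : Type} [Fintype S] [Fintype X] [Fintype Y]

theorem convex_setOf_isChannel : Convex ℝ {l : X → Y → ℝ | IsChannel l} := by
  rintro l ⟨hl₀, hl₁⟩ l' ⟨hl₀', hl₁'⟩ a b ha hb hab
  refine ⟨fun x y => ?_, fun y => ?_⟩
  · simp only [Pi.add_apply, Pi.smul_apply, smul_eq_mul]
    have := hl₀ x y
    have := hl₀' x y
    positivity
  · simp only [Pi.add_apply, Pi.smul_apply, smul_eq_mul]
    rw [sum_add_distrib, ← mul_sum, ← mul_sum, hl₁ y, hl₁' y, mul_one, mul_one, hab]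

theorem isCompact_setOf_isChannel : IsCompact {l : X → Y → ℝ | IsChannel l} := by
  have hclosed : IsClosed {l : X → Y → ℝ | IsChannel l} := by
    simp only [IsChannel, Set.ofPred_and, Set.ofPred_forall]
    exact (isClosed_iInter fun x => isClosed_iInter fun y =>
        isClosed_le continuous_const (by fun_prop)).inter
      (isClosed_iInter fun y => isClosed_eq (by fun_prop) continuous_const)
  refine (isCompact_univ_pi fun _ => isCompact_univ_pi fun _ => isCompact_Icc (b := (1 : ℝ)))
    |>.of_isClosed_subset hclosed fun l hl x _ y _ => ⟨hl.1 x y, ?_⟩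
  calc l x y ≤ ∑ x', l x' y := single_le_sum (fun x' _ => hl.1 x' y) (mem_univ x)
    _ = 1 := hl.2 y

def detChannel [DecidableEq X] (g : Y → X) : X → Y → ℝ := fun x y => if g y = x then 1 else 0

theorem isChannel_detChannel [DecidableEq X] (g : Y → X) : IsChannel (detChannel g) :=
  ⟨fun x y => by unfold detChannel; split_ifs <;> norm_num, fun y => by simp [detChannel]⟩

def chanCompLeft (κ : Y → S → ℝ) : (X → Y → ℝ) →ₗ[ℝ] (X × S → ℝ) where
  toFun l := Function.uncurry (chanComp l κ)
  map_add' l l' := by ext ⟨x, s⟩; simp [chanComp, add_mul, sum_add_distrib]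
  map_smul' a l := by ext ⟨x, s⟩; simp [chanComp, mul_sum, mul_assoc]

noncomputable def payoff (p : S → ℝ) (u : A × S → ℝ) (κ : X → S → ℝ) (d : X → A) : ℝ :=
  ∑ s, ∑ x, p s * κ x s * u (d x, s)

theorem le_optUtility [Fintype A] (p : S → ℝ) (u : A × S → ℝ) (κ : X → S → ℝ) (d : X → A) :
    payoff p u κ d ≤ optUtility p u κ :=
  le_ciSup (Set.finite_range _).bddAbove d

theorem payoff_chanComp (p : S → ℝ) (u : A × S → ℝ) (l : X → Y → ℝ) (κ : Y → S → ℝ)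
    (d : X → A) :
    payoff p u (chanComp l κ) d = ∑ y, ∑ x, l x y * ∑ s, p s * κ y s * u (d x, s) := by
  simp only [payoff, chanComp, sum_mul, mul_sum]
  rw [sum_comm, sum_congr rfl fun x _ => sum_comm, sum_comm]
  exact sum_congr rfl fun y _ => sum_congr rfl fun x _ => sum_congr rfl fun s _ => by ring

theorem payoff_eq_sum_swap (p : S → ℝ) (u : A × S → ℝ) (κ : Y → S → ℝ) (d : Y → A) :
    payoff p u κ d = ∑ y, ∑ s, p s * κ y s * u (d y, s) :=
  sum_comm

theorem payoff_chanComp_detChannel [DecidableEq X] (p : S → ℝ) (u : A × S → ℝ)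
    (κ : Y → S → ℝ) (d : X → A) (g : Y → X) :
    payoff p u (chanComp (detChannel g) κ) d = payoff p u κ (d ∘ g) := by
  rw [payoff_chanComp, payoff_eq_sum_swap]
  simp [detChannel, ite_mul]

theorem exists_payoff_chanComp_le {l : X → Y → ℝ} (hl : IsChannel l) (p : S → ℝ)
    (u : A × S → ℝ) (κ : Y → S → ℝ) (d : X → A) :
    ∃ g : Y → X, payoff p u (chanComp l κ) d ≤ payoff p u κ (d ∘ g) := by
  choose g hg using fun y =>
    exists_sum_mul_le_apply (hl.1 · y) (hl.2 y) fun x => ∑ s, p s * κ y s * u (d x, s)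
  exact ⟨g, (payoff_chanComp p u l κ d).trans_le <|
    (sum_le_sum fun y _ => hg y).trans_eq (payoff_eq_sum_swap p u κ (d ∘ g)).symm⟩

theorem optUtility_chanComp_le [Fintype A] [Nonempty A] {l : X → Y → ℝ} (hl : IsChannel l)
    (p : S → ℝ) (u : A × S → ℝ) (κ : Y → S → ℝ) :
    optUtility p u (chanComp l κ) ≤ optUtility p u κ :=
  ciSup_le fun d =>
    let ⟨g, hg⟩ := exists_payoff_chanComp_le hl p u κ d
    hg.trans (le_optUtility p u κ (d ∘ g))

theorem payoff_id_div {p : S → ℝ} (hp : ∀ s, p s ≠ 0) (c : X × S → ℝ) (κ : X → S → ℝ) :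
    payoff p (fun q => c q / p q.2) κ id = ∑ q, Function.uncurry κ q * c q := by
  rw [payoff, sum_comm, Fintype.sum_prod_type]
  refine sum_congr rfl fun x _ => sum_congr rfl fun s _ => ?_
  rw [Function.uncurry_apply_pair, id]
  field_simp [hp s]

theorem isGarbling_of_forall_optUtility_le [Nonempty X] {p : S → ℝ} (hp : ∀ s, 0 < p s)
    {κ₁ : X → S → ℝ} {κ₂ : Y → S → ℝ}
    (h : ∀ u : X × S → ℝ, optUtility p u κ₁ ≤ optUtility p u κ₂) : IsGarbling κ₁ κ₂ := by
  classical
  by_contra hng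
  set K : Set (X × S → ℝ) := chanCompLeft κ₂ '' {l | IsChannel l}
  have hclosed : IsClosed K :=
    (isCompact_setOf_isChannel.image
      (chanCompLeft κ₂).continuous_of_finiteDimensional).isClosed
  have hκ₁ : Function.uncurry κ₁ ∉ K := by
    rintro ⟨l, hl, hlκ⟩
    exact hng ⟨l, hl, fun x s => (congrFun hlκ (x, s)).symm⟩
  obtain ⟨c, b, hc, hcκ₁⟩ :=
    exists_sum_mul_lt_of_notMem (convex_setOf_isChannel.linear_image _) hclosed hκ₁
  have hp₀ : ∀ s, p s ≠ 0 := fun s => (hp s).ne'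
  set u : X × S → ℝ := fun q => c q / p q.2
  have hκ₁_gt : b < optUtility p u κ₁ :=
    hcκ₁.trans_le <| (payoff_id_div hp₀ c κ₁).symm.trans_le (le_optUtility p u κ₁ id)
  have hκ₂_le : optUtility p u κ₂ ≤ b := ciSup_le fun d : Y → X =>
    calc payoff p u κ₂ d = payoff p u (chanComp (detChannel d) κ₂) id :=
          (payoff_chanComp_detChannel p u κ₂ id d).symm
      _ = ∑ q, chanCompLeft κ₂ (detChannel d) q * c q := payoff_id_div hp₀ c _
      _ ≤ b := (hc _ ⟨_, isChannel_detChannel d, rfl⟩).le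
  exact (hκ₂_le.trans_lt hκ₁_gt).not_ge (h u)

end Channels

theorem blackwell_fixed_input {S X₁ X₂ : Type} [Fintype S] [Fintype X₁] [Fintype X₂]
    (κ₁ : X₁ → S → ℝ) (κ₂ : X₂ → S → ℝ)
    (hκ₁ : IsChannel κ₁)
    (p : S → ℝ) (hp : IsDist p) (hfull : ∀ s, 0 < p s) :
    IsGarbling κ₁ κ₂ ↔
      (∀ (A : Type) [Fintype A] [Nonempty A] (u : A × S → ℝ),
        optUtility p u κ₁ ≤ optUtility p u κ₂) := by
  obtain ⟨s⟩ := nonempty_of_sum_eq_one hp.2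
  have := nonempty_of_sum_eq_one (hκ₁.2 s)
  refine ⟨fun ⟨l, hl, hκ⟩ A _ _ u => ?_, fun h => isGarbling_of_forall_optUtility_le hfull (h X₁)⟩
  obtain rfl : κ₁ = chanComp l κ₂ := funext₂ hκ
  exact optUtility_chanComp_le hl p u κ₂
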